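/- Every finite subgroup of GL_d(ℚ) is conjugate in GL_d(ℚ) to a subgroup of GL_d(ℤ). -/

import Mathlib

open Matrix

/-- Every finite subgroup of `GL_d(ℚ)` is conjugate in `GL_d(ℚ)` to a subgroup of
`GL_d(ℤ)`. -/
theorem finite_subgroup_conjugate_to_integral (d : ℕ)
    (G : Subgroup (GL (Fin d) ℚ)) (hG : Finite G) :
    ∃ g : GL (Fin d) ℚ, ∀ A ∈ G, ∃ B : GL (Fin d) ℤ,
      g * A * g⁻¹ = Matrix.GeneralLinearGroup.map (Int.castRingHom ℚ) B := by
  classical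
  set std := Pi.basisFun ℚ (Fin d) with hstd
  -- the G-orbit of the standard basis
  set S : Set (Fin d → ℚ) :=
    Set.range (fun p : G × Fin d =>
      ((p.1 : GL (Fin d) ℚ) : Matrix (Fin d) (Fin d) ℚ).mulVec (std p.2)) with hS
  set L : Submodule ℤ (Fin d → ℚ) := Submodule.span ℤ S with hL
  have hfin : L.FG := Submodule.fg_span (Set.finite_range _)
  haveI : Module.Finite ℤ L := Module.Finite.iff_fg.mpr hfin
  haveI : Module.Free ℤ L := inferInstance
  set b := Module.Free.chooseBasis ℤ L with hb
  set ι := Module.Free.ChooseBasisIndex ℤ L with hι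
  set bV : ι → (Fin d → ℚ) := fun i => (b i : Fin d → ℚ) with hbV
  -- S ⊆ L, in particular the standard basis is in L
  have hSL : S ⊆ (L : Set (Fin d → ℚ)) := Submodule.subset_span
  have hstdL : ∀ i, std i ∈ L := by
    intro i
    have : ((1 : GL (Fin d) ℚ) : Matrix (Fin d) (Fin d) ℚ).mulVec (std i) ∈ S :=
      ⟨(⟨1, G.one_mem⟩, i), rfl⟩
    simpa using hSL this
  -- members of L are integer combinations of bV
  have hmem : ∀ x : L, (x : Fin d → ℚ) = ∑ j : ι, ((b.repr x j : ℤ) : ℚ) • bV j := by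
    intro x
    conv_lhs => rw [← b.sum_repr x]
    push_cast
    simp only [Submodule.coe_sum, Submodule.coe_smul, ← Int.cast_smul_eq_zsmul ℚ]
    rfl
  -- bV is ℚ-linearly independent
  have hindep : LinearIndependent ℚ bV := by
    rw [← LinearIndependent.iff_fractionRing ℤ ℚ]
    exact b.linearIndependent.map' L.subtype (Submodule.ker_subtype L)
  -- bV spans (over ℚ)
  have hLspan : ∀ x ∈ L, x ∈ Submodule.span ℚ (Set.range bV) := by
    intro x hx
    rw [show x = ∑ j : ι, ((b.repr ⟨x, hx⟩ j : ℤ) : ℚ) • bV j from hmem ⟨x, hx⟩]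
    exact Submodule.sum_mem _ fun j _ =>
      Submodule.smul_mem _ _ (Submodule.subset_span ⟨j, rfl⟩)
  have hspan : ⊤ ≤ Submodule.span ℚ (Set.range bV) := by
    have h2 : Submodule.span ℚ (Set.range std) ≤ Submodule.span ℚ (Set.range bV) := by
      rw [Submodule.span_le]
      rintro x ⟨i, rfl⟩
      exact hLspan _ (hstdL i)
    rw [std.span_eq] at h2
    exact h2
  set c0 : Module.Basis ι ℚ (Fin d → ℚ) := Module.Basis.mk hindep hspan with hc0
  have hcard : Fintype.card ι = d := by
    have := Module.finrank_eq_card_basis c0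
    simp [Module.finrank_pi] at this
    omega
  set e : ι ≃ Fin d := Fintype.equivFinOfCardEq hcard with he
  -- make the new basis opaque
  obtain ⟨c, hc⟩ : ∃ c' : Module.Basis (Fin d) ℚ (Fin d → ℚ), c' = c0.reindex e := ⟨_, rfl⟩
  have hce : ∀ j : ι, c (e j) = bV j := by
    intro j
    rw [hc, Module.Basis.reindex_apply, Equiv.symm_apply_apply, hc0, Module.Basis.mk_apply]
  -- c's vectors lie in L
  have hcL : ∀ i, c i ∈ L := by
    intro i
    rw [hc, Module.Basis.reindex_apply, hc0, Module.Basis.mk_apply]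
    exact (b (e.symm i)).2
  -- integer coordinates of elements of L in basis c
  have hcoord : ∀ x ∈ L, ∀ k, ∃ n : ℤ, c.repr x k = n := by
    intro x hx k
    refine ⟨b.repr ⟨x, hx⟩ (e.symm k), ?_⟩
    have hx' : x = ∑ j : ι, ((b.repr ⟨x, hx⟩ j : ℤ) : ℚ) • c (e j) := by
      simp only [hce]
      exact hmem ⟨x, hx⟩
    conv_lhs => rw [hx']
    simp only [map_sum, _root_.map_smul, Module.Basis.repr_self, Finsupp.coe_finset_sum,
      Finset.sum_apply, Finsupp.coe_smul, Pi.smul_apply, Finsupp.single_apply, smul_eq_mul]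
    rw [Finset.sum_eq_single (e.symm k)]
    · simp
    · intro j _ hj
      rw [if_neg, mul_zero]
      intro h; exact hj (by rw [← h]; simp)
    · simp
  -- G preserves L
  have hinv : ∀ A ∈ G, ∀ x ∈ L, ((A : GL (Fin d) ℚ) : Matrix (Fin d) (Fin d) ℚ).mulVec x ∈ L := by
    intro A hA x hx
    induction hx using Submodule.span_induction with
    | mem y hy =>
        obtain ⟨⟨⟨g, hg⟩, i⟩, rfl⟩ := hy
        apply hSL
        refine ⟨(⟨A * g, G.mul_mem hA hg⟩, i), ?_⟩
        simp [mulVec_mulVec]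
    | zero => simp [mulVec_zero, L.zero_mem]
    | add y z _ _ hy hz => rw [mulVec_add]; exact L.add_mem hy hz
    | smul n y _ hy =>
        have : ((A : GL (Fin d) ℚ) : Matrix (Fin d) (Fin d) ℚ).mulVec (n • y)
            = n • ((A : GL (Fin d) ℚ) : Matrix (Fin d) (Fin d) ℚ).mulVec y := by
          rw [← mulVecLin_apply, ← mulVecLin_apply, map_zsmul]
        rw [this]; exact L.smul_mem n hy
  -- the change-of-basis matrix, made opaque
  obtain ⟨P, hP⟩ : ∃ P' : Matrix (Fin d) (Fin d) ℚ, P' = std.toMatrix ⇑c := ⟨_, rfl⟩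
  haveI hPinv : Invertible P := hP ▸ std.invertibleToMatrix c
  have hPentry : ∀ k i, P k i = c i k := by
    intro k i; rw [hP, Module.Basis.toMatrix_apply]; simp [hstd]
  -- key: for A ∈ G there is an integer matrix Bm with A * P = P * Bm.map cast
  have key : ∀ A ∈ G, ∃ Bm : Matrix (Fin d) (Fin d) ℤ,
      ((A : GL (Fin d) ℚ) : Matrix (Fin d) (Fin d) ℚ) * P = P * Bm.map (Int.cast : ℤ → ℚ) := by
    intro A hA
    have hAc : ∀ i, ((A : GL (Fin d) ℚ) : Matrix (Fin d) (Fin d) ℚ).mulVec (c i) ∈ L :=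
      fun i => hinv A hA _ (hcL i)
    choose Bm hBm using fun i k => hcoord _ (hAc i) k
    refine ⟨Matrix.of (fun k i => Bm i k), ?_⟩
    ext k i
    have lhs : (((A : GL (Fin d) ℚ) : Matrix (Fin d) (Fin d) ℚ) * P) k i
        = ((A : GL (Fin d) ℚ) : Matrix (Fin d) (Fin d) ℚ).mulVec (c i) k := by
      simp only [Matrix.mul_apply, Matrix.mulVec, dotProduct]
      exact Finset.sum_congr rfl fun j _ => by rw [hPentry]
    have rhs : (P * (Matrix.of (fun k i => Bm i k) : Matrix (Fin d) (Fin d) ℤ).map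
          (Int.cast : ℤ → ℚ)) k i
        = ((A : GL (Fin d) ℚ) : Matrix (Fin d) (Fin d) ℚ).mulVec (c i) k := by
      have hcoef : ∀ j, ((Bm i j : ℤ) : ℚ)
          = c.repr (((A : GL (Fin d) ℚ) : Matrix (Fin d) (Fin d) ℚ).mulVec (c i)) j :=
        fun j => (hBm i j).symm
      simp only [Matrix.mul_apply, Matrix.map_apply, Matrix.of_apply]
      rw [Finset.sum_congr rfl (fun j _ => by rw [hPentry, hcoef j])]
      calc (∑ j, c j k * c.repr (((A : GL (Fin d) ℚ) : Matrix _ _ ℚ).mulVec (c i)) j)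
          = (∑ j, c.repr (((A : GL (Fin d) ℚ) : Matrix _ _ ℚ).mulVec (c i)) j • c j) k := by
            rw [Finset.sum_apply]
            exact Finset.sum_congr rfl fun j _ => by
              rw [Pi.smul_apply, smul_eq_mul, mul_comm]
        _ = _ := by rw [Module.Basis.sum_repr]
    rw [lhs, rhs]
  -- assemble
  refine ⟨(unitOfInvertible P)⁻¹, ?_⟩
  intro A hA
  obtain ⟨Bm, hBm⟩ := key A hA
  obtain ⟨Bm', hBm'⟩ := key A⁻¹ (G.inv_mem hA)
  have hAA' : ((A : GL (Fin d) ℚ) : Matrix (Fin d) (Fin d) ℚ)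
      * ((A⁻¹ : GL (Fin d) ℚ) : Matrix (Fin d) (Fin d) ℚ) = 1 := by
    rw [← Units.val_mul, mul_inv_cancel, Units.val_one]
  have hA'A : ((A⁻¹ : GL (Fin d) ℚ) : Matrix (Fin d) (Fin d) ℚ)
      * ((A : GL (Fin d) ℚ) : Matrix (Fin d) (Fin d) ℚ) = 1 := by
    rw [← Units.val_mul, inv_mul_cancel, Units.val_one]
  have hcastinj : Function.Injective ((Int.cast : ℤ → ℚ)) := Int.cast_injective
  have hmap : ∀ M N : Matrix (Fin d) (Fin d) ℤ,
      (M * N).map (Int.cast : ℤ → ℚ) = M.map Int.cast * N.map Int.cast := by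
    intro M N
    exact Matrix.map_mul (f := Int.castRingHom ℚ)
  have hcancel : ∀ X Y : Matrix (Fin d) (Fin d) ℚ, P * X = P * Y → X = Y := by
    intro X Y h
    have := congrArg (fun Z => ⅟P * Z) h
    simpa [← Matrix.mul_assoc] using this
  have h1 : Bm * Bm' = 1 := by
    apply Matrix.map_injective hcastinj (f := Int.cast)
    show (Bm * Bm').map (Int.cast : ℤ → ℚ) = (1 : Matrix (Fin d) (Fin d) ℤ).map (Int.cast : ℤ → ℚ)
    rw [hmap]
    apply hcancel
    rw [← Matrix.mul_assoc, ← hBm, Matrix.mul_assoc, ← hBm', ← Matrix.mul_assoc, hAA']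
    simp
  have h2 : Bm' * Bm = 1 := by
    apply Matrix.map_injective hcastinj (f := Int.cast)
    show (Bm' * Bm).map (Int.cast : ℤ → ℚ) = (1 : Matrix (Fin d) (Fin d) ℤ).map (Int.cast : ℤ → ℚ)
    rw [hmap]
    apply hcancel
    rw [← Matrix.mul_assoc, ← hBm', Matrix.mul_assoc, ← hBm, ← Matrix.mul_assoc, hA'A]
    simp
  refine ⟨⟨Bm, Bm', h1, h2⟩, ?_⟩
  apply Units.ext
  show ⅟P * ((A : GL (Fin d) ℚ) : Matrix (Fin d) (Fin d) ℚ) * P = _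
  have hcoeB : (Matrix.GeneralLinearGroup.map (Int.castRingHom ℚ)
      (⟨Bm, Bm', h1, h2⟩ : GL (Fin d) ℤ) : Matrix (Fin d) (Fin d) ℚ)
      = Bm.map (Int.cast : ℤ → ℚ) := rfl
  rw [hcoeB, Matrix.mul_assoc, hBm, ← Matrix.mul_assoc, invOf_mul_self, Matrix.one_mul]
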